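/- If B is a breakdown sequence for a finite directed graph D without self-loops, then there exists a constructive quasi-kernel Q for B and D with Q ⊆ F(B), where F(B) is the set of first components of the pairs in B. -/

import Mathlib

/-- A finite directed graph without self-loops: a finite vertex set together with a
(decidable) arc relation whose arcs join vertices and which has no self-loops. -/
structure FinDigraph (α : Type) [DecidableEq α] where
  verts : Finset α
  adj : α → α → Bool
  adj_mem_left : ∀ u v, adj u v = true → u ∈ verts
  adj_mem_right : ∀ u v, adj u v = true → v ∈ verts
  no_loops : ∀ u, adj u u = false

namespace FinDigraph

variable {α : Type} [DecidableEq α]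

/-- The open out-neighborhood `N⁺(u)`. -/
def outNbhd (D : FinDigraph α) (u : α) : Finset α := D.verts.filter (fun v => D.adj u v)

/-- The closed out-neighborhood `N⁺[u] = N⁺(u) ∪ {u}`. -/
def closedNbhd (D : FinDigraph α) (u : α) : Finset α := insert u (D.outNbhd u)

/-- The out-degree `d⁺(u) = |N⁺(u)|`. -/
def outDeg (D : FinDigraph α) (u : α) : ℕ := (D.outNbhd u).card

/-- `D − S`: the subgraph induced by `V(D) − S`. -/
def del (D : FinDigraph α) (S : Finset α) : FinDigraph α where
  verts := D.verts \ S
  adj := fun u v => D.adj u v && decide (u ∉ S) && decide (v ∉ S)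
  adj_mem_left := by
    intro u v h
    simp only [Bool.and_eq_true, decide_eq_true_eq] at h
    exact Finset.mem_sdiff.2 ⟨D.adj_mem_left u v h.1.1, h.1.2⟩
  adj_mem_right := by
    intro u v h
    simp only [Bool.and_eq_true, decide_eq_true_eq] at h
    exact Finset.mem_sdiff.2 ⟨D.adj_mem_right u v h.1.1, h.2⟩
  no_loops := by intro u; simp [D.no_loops u]

/-- A source: a vertex with no ingoing arc. -/
def IsSource (D : FinDigraph α) (u : α) : Prop := u ∈ D.verts ∧ ∀ v, D.adj v u = false

/-- The set of sources of `D`. -/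
def sources (D : FinDigraph α) : Finset α :=
  D.verts.filter (fun u => ∀ v ∈ D.verts, D.adj v u = false)

/-- A quasi-kernel: an independent set `Q ⊆ V(D)` such that every vertex of `D`
is in `Q`, has an in-neighbor in `Q`, or is reachable in two steps from `Q`. -/
def IsQuasiKernel (D : FinDigraph α) (Q : Finset α) : Prop :=
  Q ⊆ D.verts ∧
  (∀ u ∈ Q, ∀ v ∈ Q, D.adj u v = false) ∧
  (∀ w ∈ D.verts, w ∈ Q ∨ (∃ v ∈ Q, D.adj v w = true) ∨
    (∃ u ∈ Q, ∃ v, D.adj u v = true ∧ D.adj v w = true))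

/-- Breakdown sequences (Definition 3 of the paper). -/
inductive IsBDS : FinDigraph α → List (α × Finset α) → Prop where
  | nil (D : FinDigraph α) : D.verts = ∅ → IsBDS D []
  | isolated (D : FinDigraph α) (u : α) (B : List (α × Finset α)) :
      (∀ x y, D.adj x y = false) → u ∈ D.verts →
      IsBDS (D.del {u}) B → IsBDS D ((u, (∅ : Finset α)) :: B)
  | step (D : FinDigraph α) (u : α) (B : List (α × Finset α)) :
      u ∈ D.verts → 0 < D.outDeg u →
      ((D.del (D.closedNbhd u)).sources \ D.sources).card ≤ D.outDeg u →
      IsBDS (D.del (D.closedNbhd u)) B → IsBDS D ((u, D.outNbhd u) :: B)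

/-- `F(B)`: the set of first components of the pairs in `B`. -/
def F (B : List (α × Finset α)) : Finset α := (B.map Prod.fst).toFinset

/-- A quasi-kernel `Q` is constructive with regard to `B` and `D`
(Definition 5 of the paper). -/
def IsConstructive (D : FinDigraph α) (B : List (α × Finset α)) (Q : Finset α) : Prop :=
  IsQuasiKernel D Q ∧
  ∀ p ∈ B, p.1 ∈ Q ∨ (∃ v ∈ Q, D.adj v p.1 = true) ∨
    (p.2 = ∅ ∧ ∃ u v M, ((u : α), (M : Finset α)) ∈ B ∧ v ∈ M ∧ D.adj v p.1 = true)

end FinDigraph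


/-!
Induction along the breakdown sequence. A constructive quasi-kernel `Q` of `D − S`, with
`S = {u}` or `S = N⁺[u]`, extends to `D`: by `Q` itself when some vertex of `Q` points to `u`,
and by `Q ∪ {u}` otherwise. Every vertex of `N⁺[u]` is then reached from the new set within two
steps through `u`, the vertices outside `S` keep their witnesses from `D − S`, and `u` stays
independent from `Q` because `Q` avoids `N⁺[u]`.
-/

namespace FinDigraph

variable {α : Type} [DecidableEq α] {D : FinDigraph α}

@[simp]
lemma del_adj {S : Finset α} {u v : α} :
    (D.del S).adj u v = true ↔ D.adj u v = true ∧ u ∉ S ∧ v ∉ S := by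
  simp [del, and_assoc]

@[simp]
lemma mem_del_verts {S : Finset α} {w : α} : w ∈ (D.del S).verts ↔ w ∈ D.verts ∧ w ∉ S :=
  Finset.mem_sdiff

lemma adj_of_del_adj {S : Finset α} {u v : α} (h : (D.del S).adj u v = true) :
    D.adj u v = true :=
  (del_adj.1 h).1

lemma mem_closedNbhd {u w : α} : w ∈ D.closedNbhd u ↔ w = u ∨ D.adj u w = true := by
  simp only [closedNbhd, outNbhd, Finset.mem_insert, Finset.mem_filter]
  exact or_congr_right ⟨fun h => h.2, fun h => ⟨D.adj_mem_right u w h, h⟩⟩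

lemma adj_eq_false_of_mem_del_closedNbhd {u q : α} (hq : q ∈ (D.del (D.closedNbhd u)).verts) :
    D.adj u q = false := by
  rw [← Bool.not_eq_true]
  exact fun h => (mem_del_verts.1 hq).2 (mem_closedNbhd.2 (.inr h))

lemma F_cons (u : α) (N : Finset α) (B : List (α × Finset α)) :
    F ((u, N) :: B) = insert u (F B) := by
  simp [F]

def IsIndependent (D : FinDigraph α) (Q : Finset α) : Prop :=
  ∀ a ∈ Q, ∀ b ∈ Q, D.adj a b = false

def Covers (D : FinDigraph α) (Q : Finset α) (w : α) : Prop :=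
  w ∈ Q ∨ (∃ v ∈ Q, D.adj v w = true) ∨ ∃ u ∈ Q, ∃ v, D.adj u v = true ∧ D.adj v w = true

def ConstructiveAt (D : FinDigraph α) (B : List (α × Finset α)) (Q : Finset α)
    (p : α × Finset α) : Prop :=
  p.1 ∈ Q ∨ (∃ v ∈ Q, D.adj v p.1 = true) ∨
    (p.2 = ∅ ∧ ∃ u v M, ((u : α), (M : Finset α)) ∈ B ∧ v ∈ M ∧ D.adj v p.1 = true)

lemma isQuasiKernel_iff {Q : Finset α} :
    D.IsQuasiKernel Q ↔ Q ⊆ D.verts ∧ D.IsIndependent Q ∧ ∀ w ∈ D.verts, D.Covers Q w :=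
  Iff.rfl

lemma isConstructive_iff {B : List (α × Finset α)} {Q : Finset α} :
    D.IsConstructive B Q ↔ D.IsQuasiKernel Q ∧ ∀ p ∈ B, D.ConstructiveAt B Q p :=
  Iff.rfl

lemma Covers.mono {D' : FinDigraph α} {Q Q' : Finset α} {w : α} (h : D.Covers Q w)
    (hQ : Q ⊆ Q') (hadj : ∀ a b, D.adj a b = true → D'.adj a b = true) : D'.Covers Q' w := by
  rcases h with hw | ⟨v, hv, hvw⟩ | ⟨u, hu, v, huv, hvw⟩
  · exact .inl (hQ hw)
  · exact .inr (.inl ⟨v, hQ hv, hadj _ _ hvw⟩)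
  · exact .inr (.inr ⟨u, hQ hu, v, hadj _ _ huv, hadj _ _ hvw⟩)

lemma ConstructiveAt.mono {D' : FinDigraph α} {B B' : List (α × Finset α)} {Q Q' : Finset α}
    {p : α × Finset α} (h : D.ConstructiveAt B Q p) (hQ : Q ⊆ Q') (hB : B ⊆ B')
    (hadj : ∀ a b, D.adj a b = true → D'.adj a b = true) : D'.ConstructiveAt B' Q' p := by
  rcases h with hp | ⟨v, hv, hvp⟩ | ⟨hN, u, v, M, huM, hvM, hvp⟩
  · exact .inl (hQ hp)
  · exact .inr (.inl ⟨v, hQ hv, hadj _ _ hvp⟩)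
  · exact .inr (.inr ⟨hN, u, v, M, hB huM, hvM, hadj _ _ hvp⟩)

lemma IsIndependent.of_del {S Q : Finset α} (hQ : Q ⊆ (D.del S).verts)
    (h : (D.del S).IsIndependent Q) : D.IsIndependent Q := by
  intro a ha b hb
  have hab := h a ha b hb
  rw [← Bool.not_eq_true] at hab ⊢
  exact fun hab' => hab
    (del_adj.2 ⟨hab', (mem_del_verts.1 (hQ ha)).2, (mem_del_verts.1 (hQ hb)).2⟩)

lemma IsIndependent.insert {Q : Finset α} {u : α} (hQ : D.IsIndependent Q)
    (hout : ∀ q ∈ Q, D.adj u q = false) (hin : ∀ q ∈ Q, D.adj q u = false) :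
    D.IsIndependent (insert u Q) := by
  simp only [IsIndependent, Finset.forall_mem_insert]
  exact ⟨⟨D.no_loops u, hout⟩, fun q hq => ⟨hin q hq, hQ q hq⟩⟩

lemma covers_of_mem_closedNbhd {Q : Finset α} {u w : α} (hu : u ∈ Q)
    (hw : w ∈ D.closedNbhd u) : D.Covers Q w := by
  rcases mem_closedNbhd.1 hw with rfl | huw
  · exact .inl hu
  · exact .inr (.inl ⟨u, hu, huw⟩)

lemma covers_of_adj_of_mem_closedNbhd {Q : Finset α} {u v w : α} (hv : v ∈ Q)
    (hvu : D.adj v u = true) (hw : w ∈ D.closedNbhd u) : D.Covers Q w := by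
  rcases mem_closedNbhd.1 hw with rfl | huw
  · exact .inr (.inl ⟨v, hv, hvu⟩)
  · exact .inr (.inr ⟨v, hv, u, hvu, huw⟩)

lemma IsConstructive.cons {S Q Q' : Finset α} {u : α} {N : Finset α} {B : List (α × Finset α)}
    (hQ : (D.del S).IsConstructive B Q) (hQQ' : Q ⊆ Q') (hQ'V : Q' ⊆ D.verts)
    (hind : D.IsIndependent Q') (hS : ∀ w ∈ S, D.Covers Q' w)
    (hu : u ∈ Q' ∨ ∃ v ∈ Q', D.adj v u = true) :
    D.IsConstructive ((u, N) :: B) Q' := by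
  rw [isConstructive_iff, isQuasiKernel_iff] at hQ
  obtain ⟨⟨-, -, hcov⟩, hcon⟩ := hQ
  refine ⟨⟨hQ'V, hind, fun w hw => ?_⟩, List.forall_mem_cons.2 ⟨.imp_right .inl hu, ?_⟩⟩
  · by_cases hwS : w ∈ S
    · exact hS w hwS
    · exact (hcov w (mem_del_verts.2 ⟨hw, hwS⟩)).mono hQQ' fun _ _ => adj_of_del_adj
  · exact fun p hp => (hcon p hp).mono hQQ' (List.subset_cons_self _ _)
      fun _ _ => adj_of_del_adj

lemma IsConstructive.cons_isolated {Q : Finset α} {u : α} {N : Finset α}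
    {B : List (α × Finset α)} (hQ : (D.del {u}).IsConstructive B Q)
    (hno : ∀ x y, D.adj x y = false) (hu : u ∈ D.verts) :
    D.IsConstructive ((u, N) :: B) (insert u Q) :=
  hQ.cons (Finset.subset_insert u Q)
    (Finset.insert_subset hu (hQ.1.1.trans Finset.sdiff_subset)) (fun a _ b _ => hno a b)
    (fun _ hw => .inl (Finset.mem_singleton.1 hw ▸ Finset.mem_insert_self u Q))
    (.inl (Finset.mem_insert_self u Q))

lemma IsConstructive.cons_of_adj {Q : Finset α} {u v : α} {N : Finset α}
    {B : List (α × Finset α)} (hQ : (D.del (D.closedNbhd u)).IsConstructive B Q)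
    (hv : v ∈ Q) (hvu : D.adj v u = true) :
    D.IsConstructive ((u, N) :: B) Q :=
  hQ.cons subset_rfl (hQ.1.1.trans Finset.sdiff_subset) (IsIndependent.of_del hQ.1.1 hQ.1.2.1)
    (fun _ hw => covers_of_adj_of_mem_closedNbhd hv hvu hw) (.inr ⟨v, hv, hvu⟩)

lemma IsConstructive.cons_of_not_adj {Q : Finset α} {u : α} {N : Finset α}
    {B : List (α × Finset α)} (hQ : (D.del (D.closedNbhd u)).IsConstructive B Q)
    (hu : u ∈ D.verts) (hin : ¬ ∃ v ∈ Q, D.adj v u = true) :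
    D.IsConstructive ((u, N) :: B) (insert u Q) := by
  have hind : D.IsIndependent (insert u Q) := by
    refine (IsIndependent.of_del hQ.1.1 hQ.1.2.1).insert
      (fun q hq => adj_eq_false_of_mem_del_closedNbhd (hQ.1.1 hq)) fun q hq => ?_
    rw [← Bool.not_eq_true]
    exact fun hqu => hin ⟨q, hq, hqu⟩
  exact hQ.cons (Finset.subset_insert u Q)
    (Finset.insert_subset hu (hQ.1.1.trans Finset.sdiff_subset)) hind
    (fun _ hw => covers_of_mem_closedNbhd (Finset.mem_insert_self u Q) hw)
    (.inl (Finset.mem_insert_self u Q))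

end FinDigraph

open FinDigraph in
/-- If `B` is a breakdown sequence for `D` then there exists a constructive
quasi-kernel `Q ⊆ F(B)` for `B` and `D`. -/
theorem exists_constructive_quasiKernel {α : Type} [DecidableEq α]
    (D : FinDigraph α) (B : List (α × Finset α)) (hB : FinDigraph.IsBDS D B) :
    ∃ Q : Finset α, Q ⊆ FinDigraph.F B ∧ D.IsConstructive B Q := by
  induction hB with
  | nil D hD => exact ⟨∅, Finset.empty_subset _, ⟨by simp, by simp, by simp [hD]⟩, by simp⟩
  | isolated D u B hno hu _ ih =>
    obtain ⟨Q, hQF, hQ⟩ := ih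
    rw [F_cons]
    exact ⟨insert u Q, Finset.insert_subset_insert u hQF, hQ.cons_isolated hno hu⟩
  | step D u B hu _ _ _ ih =>
    obtain ⟨Q, hQF, hQ⟩ := ih
    rw [F_cons]
    by_cases hin : ∃ v ∈ Q, D.adj v u = true
    · obtain ⟨v, hv, hvu⟩ := hin
      exact ⟨Q, hQF.trans (Finset.subset_insert u _), hQ.cons_of_adj hv hvu⟩
    · exact ⟨insert u Q, Finset.insert_subset_insert u hQF, hQ.cons_of_not_adj hu hin⟩
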